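/- arXiv:1207.5219 — 6 statements merged into one kernel-verified Lean document; each statement's English description precedes it below -/
import Mathlib

section
/- For every real r > 0, S(r) > 1/(r² + 1/2), where S(r) = Σ_{n≥1} 2n/(n²+r²)². -/
/-!
With `c = r² + 1/2`, the differences
`1/(n² - n + c) - 1/(n² + n + c) = 2n/((n² + c)² - n²)` telescope to `1/c`, and since
`(n² + c)² - n² = (n² + r²)² + r² + 1/4`, each of them is strictly smaller than the term
`2n/(n² + r²)²` of `S r`.
-/

open Filter Topology

noncomputable def S (r : ℝ) : ℝ :=
  ∑' n : ℕ, (2 * ((n : ℝ) + 1)) / ((((n : ℝ) + 1) ^ 2 + r ^ 2) ^ 2)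

theorem hasSum_sub_succ_of_antitone {f : ℕ → ℝ} {l : ℝ} (hf : Antitone f)
    (hl : Tendsto f atTop (𝓝 l)) : HasSum (fun n ↦ f n - f (n + 1)) (f 0 - l) := by
  rw [hasSum_iff_tendsto_nat_of_nonneg fun n ↦ sub_nonneg.2 (hf n.le_succ)]
  simpa only [Finset.sum_range_sub'] using tendsto_const_nhds.sub hl

theorem one_div_sub_one_div_lt_two_mul_div_sq (r : ℝ) {x : ℝ} (hx : 0 < x) :
    1 / (x ^ 2 - x + (r ^ 2 + 1 / 2)) - 1 / (x ^ 2 + x + (r ^ 2 + 1 / 2))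
      < 2 * x / (x ^ 2 + r ^ 2) ^ 2 := by
  have hlo : 0 < x ^ 2 - x + (r ^ 2 + 1 / 2) := by nlinarith [sq_nonneg (x - 1 / 2), sq_nonneg r]
  have hhi : 0 < x ^ 2 + x + (r ^ 2 + 1 / 2) := by positivity
  rw [div_sub_div _ _ hlo.ne' hhi.ne', div_lt_div_iff₀ (by positivity) (by positivity)]
  -- the difference of the cross-multiplied sides is `2x (r² + 1/4)`
  have hsq : 0 < x * (x ^ 2 + r ^ 2) ^ 2 := by positivity
  nlinarith [sq_nonneg r]

theorem summable_mathieu (r : ℝ) :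
    Summable fun n : ℕ ↦ 2 * ((n : ℝ) + 1) / (((n : ℝ) + 1) ^ 2 + r ^ 2) ^ 2 := by
  have hcube : Summable fun n : ℕ ↦ 2 / ((n : ℝ) + 1) ^ 3 := by
    have := (Real.summable_one_div_nat_pow.2 (by norm_num : 1 < 3)).mul_left 2
    simpa [div_eq_mul_inv] using (summable_nat_add_iff 1).2 this
  refine hcube.of_nonneg_of_le (fun n ↦ by positivity) fun n ↦ ?_
  have hx : (0 : ℝ) < n + 1 := by positivity
  rw [div_le_div_iff₀ (by positivity) (by positivity)]
  nlinarith [sq_nonneg r, pow_pos hx 3, sq_nonneg (r ^ 2),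
    mul_nonneg (pow_pos hx 3).le (sq_nonneg r)]

noncomputable def mathieuTelescope (r : ℝ) (n : ℕ) : ℝ :=
  1 / ((n : ℝ) ^ 2 + n + (r ^ 2 + 1 / 2))

theorem antitone_mathieuTelescope (r : ℝ) : Antitone (mathieuTelescope r) := by
  refine antitone_nat_of_succ_le fun n ↦ one_div_le_one_div_of_le (by positivity) ?_
  push_cast
  nlinarith [(n.cast_nonneg : (0 : ℝ) ≤ n)]

theorem tendsto_mathieuTelescope (r : ℝ) : Tendsto (mathieuTelescope r) atTop (𝓝 0) := by
  have : Tendsto (fun n : ℕ ↦ (n : ℝ) ^ 2 + n + (r ^ 2 + 1 / 2)) atTop atTop :=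
    tendsto_atTop_mono (fun n ↦ by nlinarith [sq_nonneg (n : ℝ), sq_nonneg r])
      tendsto_natCast_atTop_atTop
  convert this.inv_tendsto_atTop using 1
  ext n
  simp only [mathieuTelescope, one_div, Pi.inv_apply]

theorem mathieuTelescope_sub_succ_lt (r : ℝ) (n : ℕ) :
    mathieuTelescope r n - mathieuTelescope r (n + 1)
      < 2 * ((n : ℝ) + 1) / (((n : ℝ) + 1) ^ 2 + r ^ 2) ^ 2 := by
  convert one_div_sub_one_div_lt_two_mul_div_sq r (n.cast_add_one_pos (α := ℝ)) using 3 <;>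
    · simp only [mathieuTelescope]; push_cast; ring

theorem stmt_4_general (r : ℝ) : S r > 1 / (r ^ 2 + 1 / 2) := by
  have hsum :=
    hasSum_sub_succ_of_antitone (antitone_mathieuTelescope r) (tendsto_mathieuTelescope r)
  have hstart : mathieuTelescope r 0 = 1 / (r ^ 2 + 1 / 2) := by simp [mathieuTelescope]
  rw [hstart, sub_zero] at hsum
  exact hasSum_lt (fun n ↦ (mathieuTelescope_sub_succ_lt r n).le)
    (mathieuTelescope_sub_succ_lt r 0) hsum (summable_mathieu r).hasSum

theorem stmt_4 (r : ℝ) (hr : 0 < r) : S r > 1 / (r ^ 2 + 1 / 2) :=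
  stmt_4_general r
end

section
/- For every real r > 0, S(r) < 1/r² - 1/(6r⁴) - 1/(30r⁶) + 3/(50r⁸), where S(r) = Σ_{n≥1} 2n/(n²+r²)². -/
/-!
Write `t = r²`. For `x ≥ 1` the rational function `mathieuTailBound t x` is nonnegative and
satisfies `2x / (x² + t)² ≤ mathieuTailBound t x - mathieuTailBound t (x + 1)`, so telescoping
bounds `S r` by `mathieuTailBound t 1`, which is below the claimed bound. After clearing
denominators and substituting `x = 1 + u`, both inequalities become polynomial inequalities in
`u, t ≥ 0` that are settled coefficientwise.
-/

open Filter Topology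

theorem tsum_le_of_le_sub_succ {f g : ℕ → ℝ} (hf : ∀ n, 0 ≤ f n) (hg : ∀ n, 0 ≤ g n)
    (h : ∀ n, f n ≤ g n - g (n + 1)) : ∑' n, f n ≤ g 0 :=
  Real.tsum_le_of_sum_range_le hf fun N =>
    calc ∑ n ∈ Finset.range N, f n ≤ ∑ n ∈ Finset.range N, (g n - g (n + 1)) :=
          Finset.sum_le_sum fun n _ => h n
      _ = g 0 - g N := Finset.sum_range_sub' g N
      _ ≤ g 0 := sub_le_self _ (hg N)

/-- With `F = 1 / (x² + t)`, the quotient `mathieuTailBound t x` below is the Euler–Maclaurin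
approximation `F - F' / 2 + F'' / 12 - F⁽⁴⁾ / 720 + F⁽⁶⁾ / 30240` of `∑_{n ≥ x} 2n / (n² + t)²`,
increased by `1 / (20 (x² + t)⁴)`. -/
noncomputable def mathieuTailBoundNum (t x : ℝ) : ℝ :=
  (x ^ 2 + t) ^ 6 + x * (x ^ 2 + t) ^ 5 + (3 * x ^ 2 - t) * (x ^ 2 + t) ^ 4 / 6
    + (x ^ 2 + t) ^ 3 / 20 - (5 * x ^ 4 - 10 * x ^ 2 * t + t ^ 2) * (x ^ 2 + t) ^ 2 / 30
    + (7 * x ^ 6 - 35 * x ^ 4 * t + 21 * x ^ 2 * t ^ 2 - t ^ 3) / 42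

noncomputable def mathieuTailBound (t x : ℝ) : ℝ :=
  mathieuTailBoundNum t x / (x ^ 2 + t) ^ 7

theorem mathieuTailBoundNum_nonneg {t x : ℝ} (ht : 0 ≤ t) (hx : 1 ≤ x) :
    0 ≤ mathieuTailBoundNum t x := by
  obtain ⟨u, hu, rfl⟩ : ∃ u, 0 ≤ u ∧ x = 1 + u := ⟨x - 1, by linarith, by ring⟩
  unfold mathieuTailBoundNum
  ring_nf
  positivity

theorem le_mathieuTailBoundNum_sub_succ {t x : ℝ} (ht : 0 ≤ t) (hx : 1 ≤ x) :
    2 * x * (x ^ 2 + t) ^ 5 * ((x + 1) ^ 2 + t) ^ 7 ≤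
      mathieuTailBoundNum t x * ((x + 1) ^ 2 + t) ^ 7
        - (x ^ 2 + t) ^ 7 * mathieuTailBoundNum t (x + 1) := by
  obtain ⟨u, hu, rfl⟩ : ∃ u, 0 ≤ u ∧ x = 1 + u := ⟨x - 1, by linarith, by ring⟩
  rw [← sub_nonneg]
  -- Expanded in `u` and `t`, the difference has nonnegative coefficients except at the
  -- monomials `u ^ i * t` with `i ≤ 6`, which this multiple of `(t - 1) ^ 2` absorbs.
  calc 0 ≤ 2300 * (t - 1) ^ 2 * (1 + 2 * u) ^ 6 := by positivity
    _ ≤ _ := by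
      unfold mathieuTailBoundNum
      rw [← sub_nonneg]
      ring_nf
      positivity

theorem mathieuTailBound_nonneg {t x : ℝ} (ht : 0 ≤ t) (hx : 1 ≤ x) :
    0 ≤ mathieuTailBound t x :=
  div_nonneg (mathieuTailBoundNum_nonneg ht hx) (by positivity)

theorem le_mathieuTailBound_sub_succ {t x : ℝ} (ht : 0 ≤ t) (hx : 1 ≤ x) :
    2 * x / (x ^ 2 + t) ^ 2 ≤ mathieuTailBound t x - mathieuTailBound t (x + 1) := by
  have hD : 0 < x ^ 2 + t := by positivity
  have hD' : 0 < (x + 1) ^ 2 + t := by positivity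
  rw [mathieuTailBound, mathieuTailBound, div_sub_div _ _ (by positivity) (by positivity),
    div_le_div_iff₀ (by positivity) (by positivity)]
  calc 2 * x * ((x ^ 2 + t) ^ 7 * ((x + 1) ^ 2 + t) ^ 7)
      = 2 * x * (x ^ 2 + t) ^ 5 * ((x + 1) ^ 2 + t) ^ 7 * (x ^ 2 + t) ^ 2 := by ring
    _ ≤ _ := mul_le_mul_of_nonneg_right (le_mathieuTailBoundNum_sub_succ ht hx) (by positivity)

theorem mathieuTailBound_one_lt {t : ℝ} (ht : 0 < t) :
    mathieuTailBound t 1 < 1 / t - 1 / (6 * t ^ 2) - 1 / (30 * t ^ 3) + 3 / (50 * t ^ 4) := by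
  unfold mathieuTailBound mathieuTailBoundNum
  rw [← sub_pos]
  field_simp
  ring_nf
  positivity

theorem stmt_6 (r : ℝ) (hr : 0 < r) :
    S r < 1 / r ^ 2 - 1 / (6 * r ^ 4) - 1 / (30 * r ^ 6) + 3 / (50 * r ^ 8) := by
  have ht : 0 < r ^ 2 := by positivity
  have hx (n : ℕ) : (1 : ℝ) ≤ n + 1 := by simp
  calc S r ≤ mathieuTailBound (r ^ 2) ((0 : ℕ) + 1) :=
        tsum_le_of_le_sub_succ (fun n => by positivity)
          (fun n => mathieuTailBound_nonneg ht.le (hx n))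
          (fun n => by simpa using le_mathieuTailBound_sub_succ ht.le (hx n))
    _ = mathieuTailBound (r ^ 2) 1 := by norm_num
    _ < 1 / r ^ 2 - 1 / (6 * (r ^ 2) ^ 2) - 1 / (30 * (r ^ 2) ^ 3) + 3 / (50 * (r ^ 2) ^ 4) :=
        mathieuTailBound_one_lt ht
    _ = _ := by ring
end

section
/- For all real µ > 1 and x > 0, Σ_{n≥1} 2n/(n²+x²)^µ < 1/((µ-1)x^{2µ-2}). -/
/-!
Put `A = (n+1)² + x²` and `h = n + 1`, so that `A - h = n(n+1) + x²` and `A + h = (n+1)(n+2) + x²`.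
Since `t ↦ t^(-μ)` is strictly convex, its value at the midpoint of `[A - h, A + h]` times `2h` is
less than its integral over that interval, i.e. `2h A^(-μ) < ((A-h)^(1-μ) - (A+h)^(1-μ)) / (μ-1)`.
The right-hand sides telescope in `n`, so the series is less than the first term
`(x²)^(1-μ) / (μ-1)`.
-/

open Real

lemma two_mul_rpow_neg_lt_add {μ A t : ℝ} (hμ : 0 < μ) (ht : 0 < t) (htA : t < A) :
    2 * A ^ (-μ) < (A - t) ^ (-μ) + (A + t) ^ (-μ) := by
  have hA : 0 < A := ht.trans htA
  have hsub : 0 < A - t := by linarith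
  have hadd : 0 < A + t := by linarith
  set p := (A - t) ^ (-μ)
  set q := (A + t) ^ (-μ)
  have hpq : (A ^ (-μ)) ^ 2 < p * q := by
    rw [← mul_rpow hsub.le hadd.le, ← rpow_natCast, ← rpow_mul hA.le, mul_comm, rpow_mul hA.le]
    exact rpow_lt_rpow_of_neg (mul_pos hsub hadd) (by norm_num; nlinarith) (by linarith)
  -- AM-GM: `p + q ≥ 2 √(pq) > 2 A^(-μ)`
  nlinarith [sq_nonneg (p - q), rpow_pos_of_pos hA (-μ), rpow_pos_of_pos hsub (-μ),
    rpow_pos_of_pos hadd (-μ)]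

lemma hermite_hadamard_rpow_neg {μ A h : ℝ} (hμ : 0 < μ) (hμ1 : μ ≠ 1) (hh : 0 < h)
    (hhA : h < A) :
    2 * h * A ^ (-μ) < ((A - h) ^ (1 - μ) - (A + h) ^ (1 - μ)) / (μ - 1) := by
  have hμ1' : μ - 1 ≠ 0 := sub_ne_zero.2 hμ1
  set F : ℝ → ℝ := fun t => ((A - t) ^ (1 - μ) - (A + t) ^ (1 - μ)) / (μ - 1) - 2 * t * A ^ (-μ)
  have hF : ∀ t ∈ Set.Icc 0 h,
      HasDerivAt F ((A - t) ^ (-μ) + (A + t) ^ (-μ) - 2 * A ^ (-μ)) t := by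
    rintro t ⟨ht0, hth⟩
    have hsub := ((hasDerivAt_id' t).const_sub A).rpow_const (p := 1 - μ) (Or.inl (by linarith))
    have hadd := ((hasDerivAt_id' t).const_add A).rpow_const (p := 1 - μ) (Or.inl (by linarith))
    refine (((hsub.sub hadd).div_const (μ - 1)).sub
      (((hasDerivAt_id' t).const_mul 2).mul_const (A ^ (-μ)))).congr_deriv ?_
    rw [show 1 - μ - 1 = -μ by ring]
    field_simp
    ring
  have hmono : StrictMonoOn F (Set.Icc 0 h) := by
    refine strictMonoOn_of_deriv_pos (convex_Icc 0 h)
      (fun t ht => (hF t ht).continuousAt.continuousWithinAt) fun t ht => ?_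
    rw [interior_Icc] at ht
    rw [(hF t (Set.Ioo_subset_Icc_self ht)).deriv]
    linarith [two_mul_rpow_neg_lt_add hμ ht.1 (ht.2.trans hhA)]
  have := hmono (Set.left_mem_Icc.2 hh.le) (Set.right_mem_Icc.2 hh.le) hh
  simp only [F, sub_zero, add_zero, mul_zero, zero_mul, sub_self, zero_div] at this
  linarith

lemma tsum_lt_of_lt_sub_succ {f b : ℕ → ℝ} (hf : ∀ n, 0 ≤ f n) (hb : ∀ n, 0 ≤ b n)
    (hfb : ∀ n, f n < b n - b (n + 1)) : ∑' n, f n < b 0 := by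
  have hpartial : ∀ n, ∑ i ∈ Finset.range n, (b i - b (i + 1)) ≤ b 0 := fun n => by
    rw [Finset.sum_range_sub']
    linarith [hb n]
  have hsummable : Summable fun n => b n - b (n + 1) :=
    summable_of_sum_range_le (fun n => (hf n).trans (hfb n).le) hpartial
  calc ∑' n, f n < ∑' n, (b n - b (n + 1)) :=
        hsummable.tsum_lt_tsum_of_nonneg hf (fun n => (hfb n).le) (hfb 0)
    _ ≤ b 0 := hsummable.tsum_le_of_sum_range_le hpartial

theorem stmt_8 (μ x : ℝ) (hμ : 1 < μ) (hx : 0 < x) :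
    (∑' n : ℕ, (2 * ((n : ℝ) + 1)) / ((((n : ℝ) + 1) ^ 2 + x ^ 2) ^ μ))
      < 1 / ((μ - 1) * x ^ (2 * μ - 2)) := by
  have hμ1 : 0 < μ - 1 := by linarith
  set b : ℕ → ℝ := fun n => ((n : ℝ) * (n + 1) + x ^ 2) ^ (1 - μ) / (μ - 1)
  have hb0 : b 0 = 1 / ((μ - 1) * x ^ (2 * μ - 2)) := by
    simp only [b, Nat.cast_zero, zero_mul, zero_add, ← rpow_natCast x 2, ← rpow_mul hx.le]
    rw [show (2 : ℕ) * (1 - μ) = -(2 * μ - 2) by push_cast; ring, rpow_neg hx.le]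
    field_simp
  rw [← hb0]
  refine tsum_lt_of_lt_sub_succ (fun n => by positivity) (fun n => by positivity) fun n => ?_
  have hn : (1 : ℝ) ≤ n + 1 := by simp
  have key := hermite_hadamard_rpow_neg (by linarith) hμ.ne' (by positivity : (0 : ℝ) < n + 1)
    (by nlinarith : (n : ℝ) + 1 < (n + 1) ^ 2 + x ^ 2)
  rw [div_eq_mul_inv, ← rpow_neg (by positivity)]
  simp only [b, ← sub_div]
  convert key using 4 <;> push_cast <;> ring
end

section
/- For 0 < r < 1, S(r) = Σ_{n≥0} (-1)^n (2n+2) ζ(2n+3) r^{2n}, where S(r) = Σ_{n≥1} 2n/(n²+r²)² and ζ is the Riemann zeta function. -/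
open Filter Topology

/-!
With `s = r²` and `a = m + 1`, each summand expands as
`2a/(a² + s)² = ∑ₙ (-1)ⁿ (2n+2) sⁿ / a^(2n+3)`, the derivative of a geometric series in `-s/a²`.
For `|s| < 1` the double series is dominated by `(2n+2)|s|ⁿ / (m+1)³`, so the two summations can be
swapped, and summing over `m` first produces `ζ(2n+3)`.
-/

lemma hasSum_succ_mul_geometric {x : ℝ} (hx : |x| < 1) :
    HasSum (fun n : ℕ => ((n : ℝ) + 1) * x ^ n) (1 / (1 - x) ^ 2) := by
  simpa using hasSum_choose_mul_geometric_of_norm_lt_one 1 (r := x) hx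

lemma hasSum_one_div_nat_add_one_pow_riemannZeta {k : ℕ} (hk : 1 < k) :
    HasSum (fun m : ℕ => 1 / ((m : ℝ) + 1) ^ k) (riemannZeta k).re := by
  have hs : Summable (fun m : ℕ => 1 / ((m : ℝ) + 1) ^ k) := by
    exact_mod_cast (summable_nat_add_iff 1).mpr (Real.summable_one_div_nat_pow.mpr hk)
  have hcast :
      ∑' m : ℕ, 1 / ((m : ℂ) + 1) ^ k = ((∑' m : ℕ, 1 / ((m : ℝ) + 1) ^ k : ℝ) : ℂ) := by
    push_cast
    rfl
  rw [zeta_eq_tsum_one_div_nat_add_one_cpow (by simp; exact_mod_cast hk)]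
  simp only [Complex.cpow_natCast]
  rw [hcast, Complex.ofReal_re]
  exact hs.hasSum

lemma hasSum_two_mul_div_sq_add_expansion {a s : ℝ} (ha : 0 < a) (hs : |s| < a ^ 2) :
    HasSum (fun n : ℕ => (-1) ^ n * (2 * n + 2) * s ^ n / a ^ (2 * n + 3))
      (2 * a / (a ^ 2 + s) ^ 2) := by
  have hx : |-s / a ^ 2| < 1 := by
    rwa [abs_div, abs_neg, abs_of_pos (by positivity : 0 < a ^ 2), div_lt_one (by positivity)]
  have hsum : a ^ 2 + s ≠ 0 := by
    have := neg_abs_le s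
    nlinarith
  have h := (hasSum_succ_mul_geometric hx).mul_left (2 / a ^ 3)
  rw [show 1 - -s / a ^ 2 = (a ^ 2 + s) / a ^ 2 by field_simp; ring] at h
  rw [show 2 / a ^ 3 * (1 / ((a ^ 2 + s) / a ^ 2) ^ 2) = 2 * a / (a ^ 2 + s) ^ 2 by
    field_simp] at h
  refine h.congr_fun fun n => ?_
  rw [div_pow, neg_pow s, pow_add, pow_mul]
  field_simp

lemma summable_mathieu_double_series {s : ℝ} (hs : |s| < 1) :
    Summable (fun p : ℕ × ℕ =>
      (-1) ^ p.2 * (2 * p.2 + 2) * s ^ p.2 / ((p.1 : ℝ) + 1) ^ (2 * p.2 + 3)) := by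
  have hrow : Summable (fun m : ℕ => 1 / ((m : ℝ) + 1) ^ 3) :=
    (hasSum_one_div_nat_add_one_pow_riemannZeta (by norm_num)).summable
  have hcol : Summable (fun n : ℕ => (2 * n + 2) * |s| ^ n) := by
    refine ((hasSum_succ_mul_geometric ((abs_abs s).symm ▸ hs)).mul_left 2).summable.congr
      fun n => ?_
    ring
  refine (hrow.mul_of_nonneg hcol (fun _ => by positivity) (fun _ => by positivity)).of_norm_bounded
    fun ⟨m, n⟩ => ?_
  calc ‖(-1) ^ n * (2 * n + 2) * s ^ n / ((m : ℝ) + 1) ^ (2 * n + 3)‖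
      = (2 * n + 2) * |s| ^ n / ((m : ℝ) + 1) ^ (2 * n + 3) := by
        simp [abs_of_nonneg (by positivity : (0 : ℝ) ≤ 2 * n + 2),
          abs_of_pos (by positivity : (0 : ℝ) < m + 1)]
    _ ≤ (2 * n + 2) * |s| ^ n / ((m : ℝ) + 1) ^ 3 := by
        gcongr
        · simp
        · omega
    _ = 1 / ((m : ℝ) + 1) ^ 3 * ((2 * n + 2) * |s| ^ n) := by ring

theorem tsum_mathieu_eq_tsum_riemannZeta {s : ℝ} (hs : |s| < 1) :
    ∑' m : ℕ, 2 * ((m : ℝ) + 1) / (((m : ℝ) + 1) ^ 2 + s) ^ 2 =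
      ∑' n : ℕ, (-1) ^ n * (2 * n + 2) * (riemannZeta (2 * n + 3 : ℕ)).re * s ^ n := by
  set F : ℕ → ℕ → ℝ := fun m n =>
    (-1) ^ n * (2 * n + 2) * s ^ n / ((m : ℝ) + 1) ^ (2 * n + 3)
  have hrow (m : ℕ) : HasSum (F m) (2 * ((m : ℝ) + 1) / (((m : ℝ) + 1) ^ 2 + s) ^ 2) :=
    hasSum_two_mul_div_sq_add_expansion (by positivity) (hs.trans_le (one_le_pow₀ (by simp)))
  have hcol (n : ℕ) :
      HasSum (F · n) ((-1) ^ n * (2 * n + 2) * (riemannZeta (2 * n + 3 : ℕ)).re * s ^ n) := by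
    rw [mul_right_comm]
    exact ((hasSum_one_div_nat_add_one_pow_riemannZeta (by omega)).mul_left _).congr_fun
      fun m => (mul_one_div _ _).symm
  calc ∑' m : ℕ, 2 * ((m : ℝ) + 1) / (((m : ℝ) + 1) ^ 2 + s) ^ 2
      = ∑' m, ∑' n, F m n := tsum_congr fun m => (hrow m).tsum_eq.symm
    _ = ∑' n, ∑' m, F m n := (summable_mathieu_double_series hs).tsum_comm.symm
    _ = _ := tsum_congr fun n => (hcol n).tsum_eq

theorem stmt_10 (r : ℝ) (hr0 : 0 < r) (hr1 : r < 1) :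
    S r = ∑' n : ℕ, (-1) ^ n * (2 * (n : ℝ) + 2) *
      (riemannZeta (2 * (n : ℂ) + 3)).re * r ^ (2 * n) := by
  have hr : |r ^ 2| < 1 := by
    rw [abs_pow, abs_of_pos hr0]
    exact pow_lt_one₀ hr0.le hr1 two_ne_zero
  rw [S, tsum_mathieu_eq_tsum_riemannZeta hr]
  refine tsum_congr fun n => ?_
  push_cast
  ring
end

section
/- For 0 < r ≤ 0.3, S(r) lies between consecutive partial sums of its alternating expansion: 2ζ(3) - 4ζ(5)r² + 6ζ(7)r⁴ - 8ζ(9)r⁶ ≤ S(r) ≤ 2ζ(3) - 4ζ(5)r² + 6ζ(7)r⁴, where S(r) = Σ_{n≥1} 2n/(n²+r²)². -/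
/-!
Termwise, with `m = n + 1`, the summand is `(2 / m³) · (1 + r²/m²)⁻²`, and the partial sums of
`(1 + x)⁻² = Σ (-1)ᵏ (k + 1) xᵏ` bound it from both sides for every `x ≥ 0`, since each remainder is an
explicitly nonnegative rational function of `m` and `r`. Summing over `n` turns `Σ 1/m^k` into `ζ(k)`.
-/

open Filter Topology

lemma hasSum_one_div_nat_add_one_pow_riemannZeta_re {k : ℕ} (hk : 1 < k) :
    HasSum (fun n : ℕ => 1 / ((n : ℝ) + 1) ^ k) (riemannZeta k).re := by
  have hsum : Summable (fun n : ℕ => 1 / ((n : ℝ) + 1) ^ k) := by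
    simpa using (summable_nat_add_iff 1).mpr (Real.summable_one_div_nat_pow.mpr hk)
  have hre : (1 : ℝ) < (k : ℂ).re := by simpa using hk
  convert hsum.hasSum using 1
  rw [zeta_eq_tsum_one_div_nat_add_one_cpow hre, ← Complex.ofReal_re (∑' n : ℕ, _),
    Complex.ofReal_tsum]
  push_cast
  simp only [Complex.cpow_natCast]

section MathieuTerm

variable {m : ℝ} (r : ℝ)

lemma div_sq_add_sq_sq_le (hm : 0 < m) :
    2 * m / (m ^ 2 + r ^ 2) ^ 2 ≤ 2 * (1 / m ^ 3) - 4 * r ^ 2 * (1 / m ^ 5)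
      + 6 * r ^ 4 * (1 / m ^ 7) := by
  have hrem : 2 * (1 / m ^ 3) - 4 * r ^ 2 * (1 / m ^ 5) + 6 * r ^ 4 * (1 / m ^ 7)
      - 2 * m / (m ^ 2 + r ^ 2) ^ 2
      = (8 * r ^ 6 * m ^ 2 + 6 * r ^ 8) / (m ^ 7 * (m ^ 2 + r ^ 2) ^ 2) := by
    field_simp
    ring
  have : 0 ≤ (8 * r ^ 6 * m ^ 2 + 6 * r ^ 8) / (m ^ 7 * (m ^ 2 + r ^ 2) ^ 2) := by positivity
  linarith

lemma le_div_sq_add_sq_sq (hm : 0 < m) :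
    2 * (1 / m ^ 3) - 4 * r ^ 2 * (1 / m ^ 5) + 6 * r ^ 4 * (1 / m ^ 7)
      - 8 * r ^ 6 * (1 / m ^ 9) ≤ 2 * m / (m ^ 2 + r ^ 2) ^ 2 := by
  have hrem : 2 * m / (m ^ 2 + r ^ 2) ^ 2 - (2 * (1 / m ^ 3) - 4 * r ^ 2 * (1 / m ^ 5)
      + 6 * r ^ 4 * (1 / m ^ 7) - 8 * r ^ 6 * (1 / m ^ 9))
      = (10 * r ^ 8 * m ^ 2 + 8 * r ^ 10) / (m ^ 9 * (m ^ 2 + r ^ 2) ^ 2) := by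
    field_simp
    ring
  have : 0 ≤ (10 * r ^ 8 * m ^ 2 + 8 * r ^ 10) / (m ^ 9 * (m ^ 2 + r ^ 2) ^ 2) := by positivity
  linarith

end MathieuTerm

theorem stmt_14_general (r : ℝ) :
    2 * (riemannZeta 3).re - 4 * (riemannZeta 5).re * r ^ 2
        + 6 * (riemannZeta 7).re * r ^ 4 - 8 * (riemannZeta 9).re * r ^ 6 ≤ S r ∧
      S r ≤ 2 * (riemannZeta 3).re - 4 * (riemannZeta 5).re * r ^ 2
        + 6 * (riemannZeta 7).re * r ^ 4 := by
  have ζ3 := hasSum_one_div_nat_add_one_pow_riemannZeta_re (k := 3) (by norm_num)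
  have ζ5 := hasSum_one_div_nat_add_one_pow_riemannZeta_re (k := 5) (by norm_num)
  have ζ7 := hasSum_one_div_nat_add_one_pow_riemannZeta_re (k := 7) (by norm_num)
  have ζ9 := hasSum_one_div_nat_add_one_pow_riemannZeta_re (k := 9) (by norm_num)
  push_cast at ζ3 ζ5 ζ7 ζ9
  have hupper := ((ζ3.mul_left 2).sub (ζ5.mul_left (4 * r ^ 2))).add (ζ7.mul_left (6 * r ^ 4))
  have hlower := hupper.sub (ζ9.mul_left (8 * r ^ 6))
  have hm (n : ℕ) : (0 : ℝ) < n + 1 := by positivity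
  have hS : HasSum (fun n : ℕ => 2 * ((n : ℝ) + 1) / (((n : ℝ) + 1) ^ 2 + r ^ 2) ^ 2) (S r) :=
    (Summable.of_nonneg_of_le (fun n => by positivity)
      (fun n => div_sq_add_sq_sq_le r (hm n)) hupper.summable).hasSum
  constructor
  · linarith [hasSum_le (fun n => le_div_sq_add_sq_sq r (hm n)) hlower hS]
  · linarith [hasSum_le (fun n => div_sq_add_sq_sq_le r (hm n)) hS hupper]

theorem stmt_14 (r : ℝ) (hr0 : 0 < r) (hr : r ≤ 0.3) :
    2 * (riemannZeta 3).re - 4 * (riemannZeta 5).re * r ^ 2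
        + 6 * (riemannZeta 7).re * r ^ 4 - 8 * (riemannZeta 9).re * r ^ 6 ≤ S r ∧
      S r ≤ 2 * (riemannZeta 3).re - 4 * (riemannZeta 5).re * r ^ 2
        + 6 * (riemannZeta 7).re * r ^ 4 :=
  stmt_14_general r
end

section
/- For r > 0 and m a positive integer, |S(r) - [Σ_{n=1}^{m-1} 2n/(n²+r²)² + 1/(m²+r²) + m/(m²+r²)² + (3m²-r²)/(6(m²+r²)³)]| ≤ (5m⁴ + 15m²r² + 6r⁴)/(16(m²+r²)⁵). -/
/-! Write `f(x) = 2x/(x² + r²)²` and let `A(x) = ∫ₓ^∞ f + f(x)/2 - f'(x)/12` be the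
Euler–Maclaurin approximation of the tail `∑_{n ≥ x} f(n)`, and `B(x)` the claimed error bound.
For `x ≥ 1` the one-step defect `f(x) + A(x + 1) - A(x)` is at most `B(x) - B(x + 1)` in absolute
value: after clearing denominators and substituting `x = 1 + t`, both inequalities become
polynomials in `t ≥ 0` and `r` with nonnegative coefficients. Summing the defects from `m` to `∞`
telescopes, and since `A(n) → 0` and `B ≥ 0` the tail differs from `A(m)` by at most `B(m)`. -/

open Filter Topology

open scoped NNReal

theorem abs_sum_range_sub_add_le_of_telescoping {g a b : ℕ → ℝ}
    (hstep : ∀ k, |g k + a (k + 1) - a k| ≤ b k - b (k + 1)) (N : ℕ) :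
    |∑ k ∈ Finset.range N, g k - a 0 + a N| ≤ b 0 - b N := by
  induction N with
  | zero => simp
  | succ N ih =>
    calc |∑ k ∈ Finset.range (N + 1), g k - a 0 + a (N + 1)|
        = |(∑ k ∈ Finset.range N, g k - a 0 + a N) + (g N + a (N + 1) - a N)| := by
          rw [Finset.sum_range_succ]; ring_nf
      _ ≤ (b 0 - b N) + (b N - b (N + 1)) := (abs_add_le _ _).trans (add_le_add ih (hstep N))
      _ = b 0 - b (N + 1) := by ring

theorem abs_tsum_sub_le_of_telescoping {g a b : ℕ → ℝ} (hg : Summable g)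
    (ha : Tendsto a atTop (𝓝 0)) (hb : ∀ k, 0 ≤ b k)
    (hstep : ∀ k, |g k + a (k + 1) - a k| ≤ b k - b (k + 1)) :
    |∑' k, g k - a 0| ≤ b 0 := by
  have hlim : Tendsto (fun N ↦ |∑ k ∈ Finset.range N, g k - a 0 + a N|) atTop
      (𝓝 |∑' k, g k - a 0 + 0|) :=
    ((hg.hasSum.tendsto_sum_nat.sub_const _).add ha).abs
  rw [add_zero] at hlim
  exact le_of_tendsto' hlim fun N ↦
    (abs_sum_range_sub_add_le_of_telescoping hstep N).trans (sub_le_self _ (hb N))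

namespace Mathieu

noncomputable def term (r x : ℝ) : ℝ := 2 * x / (x ^ 2 + r ^ 2) ^ 2

noncomputable def eulerMaclaurin (r x : ℝ) : ℝ :=
  1 / (x ^ 2 + r ^ 2) + x / (x ^ 2 + r ^ 2) ^ 2 + (3 * x ^ 2 - r ^ 2) / (6 * (x ^ 2 + r ^ 2) ^ 3)

noncomputable def remainderBound (r x : ℝ) : ℝ :=
  (5 * x ^ 4 + 15 * x ^ 2 * r ^ 2 + 6 * r ^ 4) / (16 * (x ^ 2 + r ^ 2) ^ 5)

theorem summable_term (r : ℝ) : Summable fun n : ℕ ↦ term r n := by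
  refine .of_nonneg_of_le (fun n ↦ by unfold term; positivity) (fun n ↦ ?_)
    ((Real.summable_one_div_nat_pow.mpr (by norm_num : 1 < 3)).mul_left 2)
  rcases Nat.eq_zero_or_pos n with rfl | hn
  · simp [term]
  have hn : (1 : ℝ) ≤ n := by exact_mod_cast hn
  calc term r n ≤ 2 * n / ((n : ℝ) ^ 2) ^ 2 := by
        unfold term; gcongr; exact le_add_of_nonneg_right (sq_nonneg r)
    _ = 2 * (1 / (n : ℝ) ^ 3) := by field_simp

theorem tsum_term_eq_S (r : ℝ) : ∑' n : ℕ, term r n = S r := by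
  rw [(summable_term r).tsum_eq_zero_add, S]
  simp [term]

theorem S_eq_sum_Ico_add_tsum (r : ℝ) (m : ℕ) :
    S r = ∑ n ∈ Finset.Ico 1 m, term r n + ∑' k, term r (k + m : ℕ) := by
  rw [← tsum_term_eq_S, ← (summable_term r).sum_add_tsum_nat_add m]
  congr 1
  refine (Finset.sum_subset (fun n hn ↦ ?_) fun n hn hn' ↦ ?_).symm
  · exact Finset.mem_range.2 (Finset.mem_Ico.1 hn).2
  · obtain rfl : n = 0 := by simp_all
    simp [term]

theorem abs_eulerMaclaurin_le (r : ℝ) {x : ℝ} (hx : 1 ≤ x) :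
    |eulerMaclaurin r x| ≤ 3 / (x ^ 2 + r ^ 2) := by
  have hu : 1 ≤ x ^ 2 + r ^ 2 := by nlinarith
  have hxu : x ≤ x ^ 2 + r ^ 2 := by nlinarith
  set u := x ^ 2 + r ^ 2
  have hu0 : 0 < u := by linarith
  have h1 : |1 / u| ≤ 1 / u := by rw [abs_of_nonneg (by positivity)]
  have h2 : |x / u ^ 2| ≤ 1 / u := by
    rw [abs_of_nonneg (by positivity), div_le_div_iff₀ (by positivity) (by positivity)]
    nlinarith
  have h3 : |(3 * x ^ 2 - r ^ 2) / (6 * u ^ 3)| ≤ 1 / u := by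
    have hnum : |3 * x ^ 2 - r ^ 2| ≤ 3 * u := abs_le.2 ⟨by nlinarith, by nlinarith⟩
    rw [abs_div, abs_of_pos (by positivity : (0 : ℝ) < 6 * u ^ 3),
      div_le_div_iff₀ (by positivity) (by positivity)]
    nlinarith
  calc |eulerMaclaurin r x|
      ≤ |1 / u| + |x / u ^ 2| + |(3 * x ^ 2 - r ^ 2) / (6 * u ^ 3)| := abs_add_three _ _ _
    _ ≤ 1 / u + 1 / u + 1 / u := by gcongr
    _ = 3 / u := by ring

theorem tendsto_eulerMaclaurin (r : ℝ) :
    Tendsto (fun n : ℕ ↦ eulerMaclaurin r n) atTop (𝓝 0) := by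
  have hu : Tendsto (fun n : ℕ ↦ (n : ℝ) ^ 2 + r ^ 2) atTop atTop :=
    tendsto_atTop_add_const_right _ _
      ((tendsto_pow_atTop two_ne_zero).comp tendsto_natCast_atTop_atTop)
  refine squeeze_zero_norm' ?_ (hu.const_div_atTop 3)
  filter_upwards [eventually_ge_atTop 1] with n hn
  exact abs_eulerMaclaurin_le r (by exact_mod_cast hn)

theorem abs_term_add_eulerMaclaurin_sub_le (r : ℝ) {x : ℝ} (hx : 1 ≤ x) :
    |term r x + eulerMaclaurin r (x + 1) - eulerMaclaurin r x| ≤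
      remainderBound r x - remainderBound r (x + 1) := by
  lift x - 1 to ℝ≥0 using sub_nonneg.2 hx with t ht
  obtain rfl : x = t + 1 := by linarith
  have hu : 0 < ((t : ℝ) + 1) ^ 2 + r ^ 2 := by positivity
  have hv : 0 < ((t : ℝ) + 1 + 1) ^ 2 + r ^ 2 := by positivity
  unfold term eulerMaclaurin remainderBound
  rw [abs_sub_le_iff]
  constructor <;> rw [← sub_nonneg] <;> field_simp <;> ring_nf <;> positivity

end Mathieu

theorem stmt_17_general (r : ℝ) (m : ℕ) (hm : 1 ≤ m) :
    |S r - ((∑ n ∈ Finset.Ico 1 m, (2 * (n : ℝ)) / (((n : ℝ) ^ 2 + r ^ 2) ^ 2))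
        + 1 / ((m : ℝ) ^ 2 + r ^ 2) + (m : ℝ) / (((m : ℝ) ^ 2 + r ^ 2) ^ 2)
        + (3 * (m : ℝ) ^ 2 - r ^ 2) / (6 * ((m : ℝ) ^ 2 + r ^ 2) ^ 3))|
      ≤ (5 * (m : ℝ) ^ 4 + 15 * (m : ℝ) ^ 2 * r ^ 2 + 6 * r ^ 4) /
          (16 * ((m : ℝ) ^ 2 + r ^ 2) ^ 5) := by
  have hstep (k : ℕ) :
      |Mathieu.term r (k + m : ℕ) + Mathieu.eulerMaclaurin r (k + 1 + m : ℕ) -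
          Mathieu.eulerMaclaurin r (k + m : ℕ)| ≤
        Mathieu.remainderBound r (k + m : ℕ) - Mathieu.remainderBound r (k + 1 + m : ℕ) := by
    have hcast : ((k + 1 + m : ℕ) : ℝ) = (k + m : ℕ) + 1 := by push_cast; ring
    rw [hcast]
    exact Mathieu.abs_term_add_eulerMaclaurin_sub_le r (by exact_mod_cast le_add_left hm)
  have hbound (k : ℕ) : 0 ≤ Mathieu.remainderBound r (k + m : ℕ) := by
    unfold Mathieu.remainderBound; positivity
  have key := abs_tsum_sub_le_of_telescoping
    ((Mathieu.summable_term r).comp_injective (add_left_injective m))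
    ((Mathieu.tendsto_eulerMaclaurin r).comp (tendsto_add_atTop_nat m)) hbound hstep
  rw [Mathieu.S_eq_sum_Ico_add_tsum r m]
  simpa [Mathieu.term, Mathieu.eulerMaclaurin, Mathieu.remainderBound, add_assoc,
    sub_add_eq_sub_sub] using key

theorem stmt_17 (r : ℝ) (hr : 0 < r) (m : ℕ) (hm : 1 ≤ m) :
    |S r - ((∑ n ∈ Finset.Ico 1 m, (2 * (n : ℝ)) / (((n : ℝ) ^ 2 + r ^ 2) ^ 2))
        + 1 / ((m : ℝ) ^ 2 + r ^ 2) + (m : ℝ) / (((m : ℝ) ^ 2 + r ^ 2) ^ 2)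
        + (3 * (m : ℝ) ^ 2 - r ^ 2) / (6 * ((m : ℝ) ^ 2 + r ^ 2) ^ 3))|
      ≤ (5 * (m : ℝ) ^ 4 + 15 * (m : ℝ) ^ 2 * r ^ 2 + 6 * r ^ 4) /
          (16 * ((m : ℝ) ^ 2 + r ^ 2) ^ 5) :=
  stmt_17_general r m hm
end
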